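/- arXiv:1109.3205 — 6 statements merged into one kernel-verified Lean document; each statement's English description precedes it below -/
import Mathlib

section
/- In the polynomial ring K[x1,...,xp,y1,...,ym] over a field K, let G be the intersection of the prime ideals (x_i, y_j) over a set I of pairs (i,j) with i ≤ p-1. If f ∈ G, then G ∩ (x_p, f) = (x_p)·G + (f). -/
open MvPolynomial

lemma aux_cancel_X {σ : Type*} {K : Type*} [Field K] (a b s : σ)
    (ha : s ≠ a) (hb : s ≠ b) (r : MvPolynomial σ K)
    (h : X s * r ∈ Ideal.span {X a, X b}) : r ∈ Ideal.span {X a, X b} := by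
  rw [← Set.image_pair, mem_ideal_span_X_image] at h ⊢
  intro d hd
  have hmem : Finsupp.single s 1 + d ∈ (X s * r).support := by
    rw [support_X_mul]
    exact Finset.mem_map.2 ⟨d, hd, rfl⟩
  obtain ⟨i, hi, hne⟩ := h _ hmem
  refine ⟨i, hi, ?_⟩
  have hsi : s ≠ i := by rcases hi with h' | h' <;> simp_all
  simpa [Finsupp.single_apply, hsi] using hne

/-- In `R = K[x₁,…,x_p, y₁,…,y_m]` with `p ≥ 2`, let `G = ⋂_{(i,j)∈I} (x_i, y_j)`
where `I` is a finite set of pairs `(i,j)` with `i ≤ p-1` (so none of these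
primes contains `x_p`).  If `f ∈ G`, then `G ∩ (x_p, f) = (x_p)·G + (f)`. -/
theorem stmt_0 (K : Type*) [Field K] (p m : ℕ) (hp : 2 ≤ p)
    (I : Finset (Fin p × Fin m))
    (hI : ∀ ij ∈ I, (ij.1 : ℕ) < p - 1)
    (f : MvPolynomial (Fin p ⊕ Fin m) K) :
    let R := MvPolynomial (Fin p ⊕ Fin m) K
    let x : Fin p → R := fun i => X (Sum.inl i)
    let y : Fin m → R := fun j => X (Sum.inr j)
    let xp : R := x ⟨p - 1, by omega⟩
    let G : Ideal R := ⨅ ij ∈ I, Ideal.span {x ij.1, y ij.2}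
    f ∈ G →
      G ⊓ (Ideal.span {xp} ⊔ Ideal.span {f}) =
        Ideal.span {xp} * G ⊔ Ideal.span {f} := by
  intro R x y xp G hf
  apply le_antisymm
  · intro g hg
    obtain ⟨hgG, hg2⟩ := hg
    have : g ∈ Ideal.span ({xp, f} : Set R) := by
      rw [Ideal.span_insert]; exact hg2
    obtain ⟨u, v, huv⟩ := Ideal.mem_span_pair.1 this
    have hxu : xp * u ∈ G := by
      have : xp * u = g - v * f := by rw [← huv]; ring
      rw [this]
      exact Ideal.sub_mem _ hgG (Ideal.mul_mem_left _ _ hf)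
    have huG : u ∈ G := by
      simp only [G, Ideal.mem_iInf] at hxu ⊢
      intro ij hij
      have h1 : (ij.1 : ℕ) < p - 1 := hI ij hij
      refine aux_cancel_X _ _ _ ?_ ?_ u (hxu ij hij)
      · simp only [Sum.inl.injEq, ne_eq]
        intro h; apply_fun (Fin.val) at h; simp at h; omega
      · simp
    rw [← huv]
    apply Ideal.add_mem
    · exact Ideal.mem_sup_left (mul_comm u xp ▸
        Ideal.mul_mem_mul (Ideal.mem_span_singleton_self xp) huG)
    · exact Ideal.mem_sup_right (Ideal.mul_mem_left _ _ (Ideal.mem_span_singleton_self f))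
  · apply sup_le
    · refine le_trans Ideal.mul_le_inf (le_inf inf_le_right ?_)
      exact le_trans inf_le_left le_sup_left
    · exact le_inf (Ideal.span_le.2 (by simpa using hf))
        (le_trans (Ideal.span_le.2 (by simp [Ideal.mem_span_singleton_self])) le_sup_right)
end

section
/- Let R be a polynomial ring K[x1,...,xp,y1,...,yq,z1,...,zs] over a field. Then the ideal quotient [(x_p, x_1⋯x_{p-1}, y_1⋯y_q·g) : (x_p, x_1⋯x_{p-1}, y_1⋯y_q)] equals (x_p, x_1⋯x_{p-1}, g), for any g ∈ R. -/
/-!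
The product `c = y₁⋯y_q` is a nonzerodivisor modulo the monomial ideal `I = (x_p, x₁⋯x_{p-1})`:
a polynomial lies in a monomial ideal iff each of its exponents dominates a generator's, and
shifting exponents by those of `c`, whose variables are disjoint from the generators', does not
change that. For such `c`, `(I + (c g)) : (I + (c)) = I + (g)` holds in any commutative ring: if
`h c = i + r c g` with `i ∈ I`, then `c (h - r g) ∈ I`, so `h - r g ∈ I`.
-/

open MvPolynomial

theorem Finsupp.le_of_le_add_of_disjoint_support {σ : Type*} {d e m : σ →₀ ℕ}
    (hd : Disjoint d.support e.support) (h : e ≤ d + m) : e ≤ m := by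
  intro i
  by_cases hi : i ∈ d.support
  · rw [Finsupp.notMem_support_iff.1 (Finset.disjoint_left.1 hd hi)]
    exact Nat.zero_le _
  · simpa [Finsupp.notMem_support_iff.1 hi] using h i

theorem MvPolynomial.mem_span_monomial_of_monomial_mul_mem {σ R : Type*} [CommSemiring R]
    {S : Set (σ →₀ ℕ)} {d : σ →₀ ℕ} (hd : ∀ e ∈ S, Disjoint d.support e.support)
    {f : MvPolynomial σ R}
    (h : monomial d 1 * f ∈ Ideal.span ((fun e => monomial e (1 : R)) '' S)) :
    f ∈ Ideal.span ((fun e => monomial e (1 : R)) '' S) := by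
  rw [mem_ideal_span_monomial_image] at h ⊢
  intro m hm
  obtain ⟨e, he, hle⟩ := h (d + m) (by
    rwa [mem_support_iff, coeff_monomial_mul, one_mul, ← mem_support_iff])
  exact ⟨e, he, Finsupp.le_of_le_add_of_disjoint_support (hd e he) hle⟩

theorem Ideal.sup_span_mul_colon_sup_span {R : Type*} [CommRing R] {I : Ideal R} {c : R}
    (hc : ∀ f, c * f ∈ I → f ∈ I) (g : R) :
    (I ⊔ span {c * g}).colon ↑(I ⊔ span {c}) = I ⊔ span {g} := by
  ext h
  constructor
  · intro hh
    have hhc : h * c ∈ I ⊔ span {c * g} :=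
      Submodule.mem_colon.1 hh c (Submodule.mem_sup_right (mem_span_singleton_self c))
    obtain ⟨i, hi, _, hz, hsum⟩ := Submodule.mem_sup.1 hhc
    obtain ⟨r, rfl⟩ := mem_span_singleton'.1 hz
    have hcancel : h - r * g ∈ I := hc _ (by convert hi using 1; linear_combination -hsum)
    have hrg : r * g ∈ span {g} := mem_span_singleton'.2 ⟨r, rfl⟩
    simpa using add_mem (Submodule.mem_sup_left hcancel) (Submodule.mem_sup_right hrg)
  · intro hh
    refine Submodule.mem_colon.2 fun k hk => ?_
    have hprod : (I ⊔ span {g}) * (I ⊔ span {c}) ≤ I ⊔ span {c * g} := by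
      simp only [mul_sup, sup_mul, span_singleton_mul_span_singleton, mul_comm g c]
      exact sup_le (sup_le (mul_le_right.trans le_sup_left) (mul_le_right.trans le_sup_left))
        (sup_le (mul_le_left.trans le_sup_left) le_sup_right)
    exact hprod (mul_mem_mul hh hk)

/-- In `R = K[x₁,…,x_p, y₁,…,y_q, z₁,…,z_s]`, the ideal quotient
`[(x_p, x₁⋯x_{p-1}, y₁⋯y_q·g) : (x_p, x₁⋯x_{p-1}, y₁⋯y_q)] = (x_p, x₁⋯x_{p-1}, g)`
for any `g`. -/
theorem stmt_1 (K : Type*) [Field K] (p q s : ℕ) (hp : 1 ≤ p)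
    (g : MvPolynomial (Fin p ⊕ Fin q ⊕ Fin s) K) :
    let R := MvPolynomial (Fin p ⊕ Fin q ⊕ Fin s) K
    let x : Fin p → R := fun i => X (Sum.inl i)
    let y : Fin q → R := fun j => X (Sum.inr (Sum.inl j))
    let xp : R := x ⟨p - 1, by omega⟩
    let Px : R := ∏ i ∈ Finset.univ.filter (fun i : Fin p => (i : ℕ) < p - 1), x i
    let Py : R := ∏ j, y j
    (Ideal.span {xp, Px, Py * g}).colon (Ideal.span {xp, Px, Py}) =
      Ideal.span {xp, Px, g} := by
  intro R x y xp Px Py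
  set dxp : Fin p ⊕ Fin q ⊕ Fin s →₀ ℕ := Finsupp.single (Sum.inl ⟨p - 1, by omega⟩) 1
  set dPx : Fin p ⊕ Fin q ⊕ Fin s →₀ ℕ :=
    ∑ i ∈ Finset.univ.filter (fun i : Fin p => (i : ℕ) < p - 1), Finsupp.single (Sum.inl i) 1
  set dPy : Fin p ⊕ Fin q ⊕ Fin s →₀ ℕ := ∑ j : Fin q, Finsupp.single (Sum.inr (Sum.inl j)) 1
  have hI : Ideal.span {xp, Px} = Ideal.span ((fun e => monomial e (1 : K)) '' {dxp, dPx}) := by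
    rw [Set.image_pair, monomial_sum_one]; rfl
  have hPy : Py = monomial dPy 1 := by rw [monomial_sum_one]; rfl
  have hdisj : ∀ e ∈ ({dxp, dPx} : Set _), Disjoint dPy.support e.support := by
    rintro e he
    refine Finset.disjoint_left.2 fun i hi hi' => ?_
    rw [Finsupp.mem_support_iff] at hi hi'
    rcases he with rfl | rfl <;> rcases i with a | b <;>
      simp_all [dxp, dPx, dPy, Finsupp.single_apply]
  have hPy_regular : ∀ f, Py * f ∈ Ideal.span {xp, Px} → f ∈ Ideal.span {xp, Px} := by
    rw [hI, hPy]
    exact fun f => mem_span_monomial_of_monomial_mul_mem hdisj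
  have hspan (z : R) : Ideal.span {xp, Px, z} = Ideal.span {xp, Px} ⊔ Ideal.span {z} := by
    simp only [Ideal.span_insert, sup_assoc]
  rw [hspan, hspan, hspan, Ideal.sup_span_mul_colon_sup_span hPy_regular]
end

section
/- Let R = K[x1, x2, y1, ..., yq, z1, ..., zs] be a polynomial ring over a field and let f ∈ R. Suppose f = x1·g1 + x2·g2 + y_{i1}⋯y_{it}·g3, where {i1 < ... < it} ⊆ {1,...,q} is maximal by inclusion among subsets S of {1,...,q} such that f can be written in the form x1·h1 + x2·h2 + (∏_{j∈S} y_j)·h3. Then the ideal quotient [(x1, x2, f) : (y1⋯yq)] equals (x1, x2, g3). -/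
/-!
Killing `x₁, x₂` identifies `R ⧸ (x₁, x₂)` with the polynomial ring `K[y, z]`, so membership in
`(x₁, x₂, h)` becomes divisibility by the image of `h`, and `(x₁, x₂, f) : (y₁⋯y_q)` becomes the
saturation of the principal ideal `(y_S · ḡ₃)` with respect to `y₁⋯y_q`. Maximality of `S` says
exactly that no `y_j` with `j ∉ S` divides `ḡ₃`; as the `y_j` are prime, `ḡ₃` is then coprime to
`∏_{j ∉ S} y_j` and the saturation is `(ḡ₃)`.
-/

open MvPolynomial

theorem Ideal.mem_ker_sup_span_singleton_iff {A B : Type*} [CommRing A] [CommRing B]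
    {f : A →+* B} (hf : Function.Surjective f) {a b : A} :
    b ∈ RingHom.ker f ⊔ Ideal.span {a} ↔ f a ∣ f b := by
  rw [sup_comm, ← Ideal.comap_map_of_surjective' f hf, Ideal.mem_comap, Ideal.map_span,
    Set.image_singleton, Ideal.mem_span_singleton]

theorem Ideal.span_insert_insert_singleton {A : Type*} [Semiring A] (a b c : A) :
    Ideal.span {a, b, c} = Ideal.span {a, b} ⊔ Ideal.span {c} := by
  rw [← Ideal.span_union, Set.insert_union, Set.singleton_union]

section Saturation

variable {α ι : Type*}

theorem dvd_of_dvd_mul_prod_of_not_dvd [CommMonoid α] [DecompositionMonoid α] {a b : α}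
    {p : ι → α} {T : Finset ι} (hp : ∀ i ∈ T, Irreducible (p i)) (ha : ∀ i ∈ T, ¬p i ∣ a)
    (h : a ∣ b * ∏ i ∈ T, p i) : a ∣ b :=
  (IsRelPrime.prod_right fun i hi =>
    ((hp i hi).isRelPrime_iff_not_dvd.mpr (ha i hi)).symm).dvd_of_dvd_mul_right h

theorem prod_mul_dvd_mul_prod_iff [CommMonoidWithZero α] [IsCancelMulZero α] [Nontrivial α]
    [DecompositionMonoid α] [Fintype ι] [DecidableEq ι] {a b : α} {p : ι → α}
    (hp : ∀ i, Irreducible (p i)) (S : Finset ι) (ha : ∀ i ∉ S, ¬p i ∣ a) :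
    (∏ i ∈ S, p i) * a ∣ b * ∏ i, p i ↔ a ∣ b := by
  have hS : ∏ i ∈ S, p i ≠ 0 := Finset.prod_ne_zero_iff.mpr fun i _ => (hp i).ne_zero
  rw [← Finset.prod_mul_prod_compl S p, mul_left_comm, mul_dvd_mul_iff_left hS]
  refine ⟨dvd_of_dvd_mul_prod_of_not_dvd (fun i _ => hp i)
    (fun i hi => ha i (Finset.mem_compl.mp hi)), fun h => h.mul_right _⟩

end Saturation

namespace MvPolynomial

variable {R σ τ : Type*} [CommRing R]

noncomputable def killInl : MvPolynomial (σ ⊕ τ) R →ₐ[R] MvPolynomial τ R :=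
  aeval (Sum.elim 0 X)

@[simp] theorem killInl_X_inl (i : σ) : killInl (R := R) (τ := τ) (X (Sum.inl i)) = 0 := by
  simp [killInl]

@[simp] theorem killInl_X_inr (t : τ) : killInl (R := R) (σ := σ) (X (Sum.inr t)) = X t := by
  simp [killInl]

theorem killInl_rename_inr (p : MvPolynomial τ R) :
    killInl (σ := σ) (rename Sum.inr p) = p := by
  rw [killInl, aeval_rename, Sum.elim_comp_inr, aeval_X_left_apply]

theorem sub_rename_killInl_mem_span (p : MvPolynomial (σ ⊕ τ) R) :
    p - rename Sum.inr (killInl p) ∈ Ideal.span (Set.range (X ∘ Sum.inl)) := by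
  set I := Ideal.span (Set.range (X ∘ Sum.inl) : Set (MvPolynomial (σ ⊕ τ) R))
  rw [← Ideal.Quotient.eq]
  have hX : ∀ i, Ideal.Quotient.mk I (X (Sum.inl i)) = 0 := fun i =>
    Ideal.Quotient.eq_zero_iff_mem.mpr (Ideal.subset_span ⟨i, rfl⟩)
  have hcomp : Ideal.Quotient.mkₐ R I =
      (Ideal.Quotient.mkₐ R I).comp ((rename Sum.inr).comp killInl) := by
    ext (i | t) <;> simp [hX]
  exact congr($hcomp p)

theorem ker_killInl :
    RingHom.ker (killInl (R := R) (σ := σ) (τ := τ)) = Ideal.span (Set.range (X ∘ Sum.inl)) := by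
  refine le_antisymm (fun p hp => ?_) (Ideal.span_le.mpr ?_)
  · simpa [(RingHom.mem_ker).mp hp] using sub_rename_killInl_mem_span p
  · rintro _ ⟨i, rfl⟩
    simp

theorem mem_span_X_inl_sup_span_singleton_iff (p h : MvPolynomial (Fin 2 ⊕ τ) R) :
    p ∈ Ideal.span {X (Sum.inl 0), X (Sum.inl 1)} ⊔ Ideal.span {h} ↔ killInl h ∣ killInl p := by
  have hker : Ideal.span {X (Sum.inl 0), X (Sum.inl 1)} =
      RingHom.ker (killInl (R := R) (σ := Fin 2) (τ := τ)) := by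
    rw [ker_killInl]
    congr 1
    ext
    simp [Fin.exists_fin_two, eq_comm]
  rw [hker]
  exact Ideal.mem_ker_sup_span_singleton_iff
    (f := (killInl : MvPolynomial (Fin 2 ⊕ τ) R →ₐ[R] _).toRingHom)
    (fun p => ⟨rename Sum.inr p, killInl_rename_inr p⟩)

end MvPolynomial

/-- In `R = K[x₁, x₂, y₁,…,y_q, z₁,…,z_s]`, suppose
`f = x₁·g₁ + x₂·g₂ + (∏_{j∈S} y_j)·g₃` where `S ⊆ {1,…,q}` is maximal by
inclusion among subsets `T` with `f ∈ (x₁,x₂) + (∏_{j∈T} y_j)·R`.  Then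
`[(x₁, x₂, f) : (y₁⋯y_q)] = (x₁, x₂, g₃)`. -/
theorem stmt_2 (K : Type*) [Field K] (q s : ℕ)
    (f g1 g2 g3 : MvPolynomial (Fin 2 ⊕ Fin q ⊕ Fin s) K)
    (S : Finset (Fin q)) :
    let R := MvPolynomial (Fin 2 ⊕ Fin q ⊕ Fin s) K
    let x : Fin 2 → R := fun i => X (Sum.inl i)
    let y : Fin q → R := fun j => X (Sum.inr (Sum.inl j))
    let admits : Finset (Fin q) → Prop := fun T =>
      f ∈ Ideal.span {x 0, x 1} ⊔ Ideal.span {∏ j ∈ T, y j}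
    admits S →
    (∀ T, admits T → S ⊆ T → T = S) →
    f = x 0 * g1 + x 1 * g2 + (∏ j ∈ S, y j) * g3 →
    (Ideal.span {x 0, x 1, f}).colon (Ideal.span {∏ j, y j}) =
      Ideal.span {x 0, x 1, g3} := by
  intro R x y admits _ hmax hf
  classical
  set φ := (killInl : R →ₐ[K] MvPolynomial (Fin q ⊕ Fin s) K)
  have hφy (T : Finset (Fin q)) : φ (∏ j ∈ T, y j) = ∏ j ∈ T, X (Sum.inl j) := by
    simp [φ, y, map_prod]
  have hφf : φ f = (∏ j ∈ S, X (Sum.inl j)) * φ g3 := by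
    simp [hf, φ, x, hφy]
  have hmem (p h : R) : p ∈ Ideal.span {x 0, x 1, h} ↔ φ h ∣ φ p := by
    rw [Ideal.span_insert_insert_singleton]
    exact mem_span_X_inl_sup_span_singleton_iff p h
  have hadmits (T : Finset (Fin q)) : admits T ↔ ∏ j ∈ T, X (Sum.inl j) ∣ φ f := by
    rw [← hφy]
    exact mem_span_X_inl_sup_span_singleton_iff f _
  have hnot_dvd : ∀ j ∉ S, ¬X (Sum.inl j) ∣ φ g3 := by
    intro j hj hdvd
    have hins : admits (insert j S) := by
      rw [hadmits, Finset.prod_insert hj, hφf, mul_comm (X _)]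
      exact mul_dvd_mul_left _ hdvd
    exact hj (hmax _ hins (Finset.subset_insert j S) ▸ Finset.mem_insert_self j S)
  ext p
  rw [Ideal.mem_colon_span_singleton, hmem, hmem, map_mul, hφf, hφy]
  exact prod_mul_dvd_mul_prod_iff (fun j => X_prime.irreducible) S hnot_dvd
end

section
/- Let I be an ideal in the formal power series ring K[[x1,...,xn]] over a field K, where monomials are ordered by the total ordering induced by (|α|, α1, ..., αn) lexicographically. Then for every k ∈ ℕ, the Hilbert-Samuel function satisfies H_I(k) = H_{mon(I)}(k), where mon(I) is the ideal generated by the initial monomials of nonzero elements of I; equivalently, H_I(k) equals the number of exponents α ∈ ℕⁿ with α ∉ N(I) and |α| ≤ k, where N(I) is the diagram of initial exponents of I. -/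
/-!
Fix a monomial order `≼` refining the total degree, such as the degree-lexicographic one.
The monomials `x^α` with `α ∉ N(J)` and `|α| ≤ k` form a `K`-basis of `R ⧸ (J + 𝔫^(k+1))`.
They span: a monomial `x^α` with `α ∈ N(J)` is congruent modulo `J` to a series whose terms
are all `≻ α`, so a downward induction along `≼` over the finitely many exponents of degree
`≤ k` reduces everything to standard monomials, the terms of degree `> k` lying in `𝔫^(k+1)`.
They are independent: if a nonzero combination `p` lies in `J + 𝔫^(k+1)`, say `p = g + h`,
then `h` has no terms of degree `≤ k`, so `g ∈ J` has the same initial exponent as `p`, which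
would then lie in `N(J)`. Hence `H_J(k)` only depends on `N(J)`, and `N(mon(I)) = N(I)`
because `N(I)` is stable under adding exponents.
-/

open MvPowerSeries Finsupp
open scoped MonomialOrder

namespace MvPowerSeries

section CommSemiring

variable {σ R : Type*} [CommSemiring R]

variable (σ R) in
noncomputable abbrev idealOfVars : Ideal (MvPowerSeries σ R) := Ideal.span (Set.range X)

theorem exists_sum_X_mul [Fintype σ] {f : MvPowerSeries σ R} (hf : constantCoeff f = 0) :
    ∃ g : σ → MvPowerSeries σ R, f = ∑ i, X i * g i ∧
      ∀ i γ, coeff (single i 1 + γ) f = 0 → coeff γ (g i) = 0 := by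
  classical
  let _ : LinearOrder σ := LinearOrder.lift' _ (Fintype.equivFin σ).injective
  -- each term `x^α` of `f` goes to `X i * g i` for the smallest variable `i` dividing it
  let g : σ → MvPowerSeries σ R := fun i γ =>
    if (single i 1 + γ).support.min = (i : WithTop σ) then coeff (single i 1 + γ) f else 0
  have hg (i γ) : coeff γ (g i) =
      if (single i 1 + γ).support.min = (i : WithTop σ) then coeff (single i 1 + γ) f else 0 :=
    rfl
  refine ⟨g, ?_, fun i γ h => by simp [hg, h]⟩
  ext α
  have hterm (i : σ) : coeff α (X i * g i) = if α.support.min = i then coeff α f else 0 := by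
    rw [X_def, coeff_monomial_mul, one_mul]
    by_cases hi : single i 1 ≤ α
    · simp [hg, hi]
    · have : α.support.min ≠ i := fun h =>
        hi (by simpa [Nat.one_le_iff_ne_zero] using Finset.mem_of_min h)
      simp [hi, this]
  simp only [map_sum, hterm]
  rcases α.support.eq_empty_or_nonempty with h | h
  · simp_all [Finsupp.support_eq_empty.1 h]
  · obtain ⟨i₀, hi₀⟩ := Finset.min_of_nonempty h
    simp [hi₀]

theorem le_order_of_mem_idealOfVars_pow {m : ℕ} {f : MvPowerSeries σ R}
    (hf : f ∈ idealOfVars σ R ^ m) : (m : ℕ∞) ≤ f.order := by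
  induction m generalizing f with
  | zero => simp
  | succ m ih =>
    rw [pow_succ'] at hf
    refine Submodule.mul_induction_on hf (fun h hh g hg => ?_) (fun g h hg hh => ?_)
    · have h1 : 1 ≤ h.order := by
        rw [one_le_order_iff_constCoeff_eq_zero]
        refine (Ideal.span_le.2 ?_ hh : h ∈ RingHom.ker constantCoeff)
        rintro _ ⟨i, rfl⟩
        simp
      calc ((m + 1 : ℕ) : ℕ∞) = 1 + m := by push_cast; ring
        _ ≤ h.order + g.order := add_le_add h1 (ih hg)
        _ ≤ (h * g).order := le_order_mul
    · exact (le_min hg hh).trans min_order_le_add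

theorem mem_idealOfVars_pow_iff [Finite σ] {m : ℕ} {f : MvPowerSeries σ R} :
    f ∈ idealOfVars σ R ^ m ↔ (m : ℕ∞) ≤ f.order := by
  cases nonempty_fintype σ
  refine ⟨le_order_of_mem_idealOfVars_pow, fun hf => ?_⟩
  induction m generalizing f with
  | zero => simp
  | succ m ih =>
    have h0 : constantCoeff f = 0 :=
      order_ne_zero_iff_constCoeff_eq_zero.1 (by intro h; simp [h] at hf)
    obtain ⟨g, rfl, hg⟩ := exists_sum_X_mul h0
    rw [pow_succ']
    refine Ideal.sum_mem _ fun i _ => Ideal.mul_mem_mul (Ideal.subset_span ⟨i, rfl⟩) (ih ?_)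
    refine nat_le_order fun γ hγ => hg i γ (coeff_of_lt_order ?_)
    calc ((single i 1 + γ).degree : ℕ∞) = 1 + γ.degree := by simp
      _ < (m + 1 : ℕ) := by norm_cast; omega
      _ ≤ _ := hf

end CommSemiring

theorem mkₐ_mem_of_forall_mkₐ_monomial_mem {σ R : Type*} [CommRing R] [Finite σ] {k : ℕ}
    {J : Ideal (MvPowerSeries σ R)} (hJ : idealOfVars σ R ^ (k + 1) ≤ J)
    {V : Submodule R (MvPowerSeries σ R ⧸ J)} {f : MvPowerSeries σ R}
    (hf : ∀ β : σ →₀ ℕ, β.degree ≤ k → Ideal.Quotient.mkₐ R J (monomial β (coeff β f)) ∈ V) :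
    Ideal.Quotient.mkₐ R J f ∈ V := by
  have htrunc : Ideal.Quotient.mkₐ R J f = Ideal.Quotient.mkₐ R J (truncTotal (k + 1) f) := by
    refine Ideal.Quotient.mk_eq_mk_iff_sub_mem _ _ |>.2 (hJ (mem_idealOfVars_pow_iff.2 ?_))
    refine nat_le_order fun β hβ => ?_
    simp [coeff_truncTotal _ hβ]
  rw [htrunc, MvPolynomial.as_sum (truncTotal (k + 1) f),
    ← MvPolynomial.coeToMvPowerSeries.ringHom_apply, map_sum, map_sum]
  refine Submodule.sum_mem _ fun β hβ => ?_
  have hβk : β.degree < k + 1 := by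
    by_contra h
    exact MvPolynomial.mem_support_iff.1 hβ (coeff_truncTotal_eq_zero _ (not_lt.1 h))
  rw [MvPolynomial.coeToMvPowerSeries.ringHom_apply, MvPolynomial.coe_monomial,
    coeff_truncTotal _ hβk]
  exact hf β (Nat.lt_succ_iff.1 hβk)

end MvPowerSeries

namespace MonomialOrder

variable {σ : Type*}

section CommSemiring

variable (m : MonomialOrder σ) {R : Type*} [CommSemiring R]

-- These are `α = exp(f)`, `N(I)` and `mon(I)` of the paper.
def IsInitialExp (f : MvPowerSeries σ R) (α : σ →₀ ℕ) : Prop :=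
  coeff α f ≠ 0 ∧ ∀ β, coeff β f ≠ 0 → α ≼[m] β

def initialDiagram (I : Ideal (MvPowerSeries σ R)) : Set (σ →₀ ℕ) :=
  {α | ∃ f ∈ I, m.IsInitialExp f α}

noncomputable def initialIdeal (I : Ideal (MvPowerSeries σ R)) : Ideal (MvPowerSeries σ R) :=
  Ideal.span {g | ∃ f ∈ I, ∃ α, m.IsInitialExp f α ∧ g = monomial α (coeff α f)}

variable {m}

theorem exists_isInitialExp {f : MvPowerSeries σ R} (hf : f ≠ 0) : ∃ α, m.IsInitialExp f α := by
  have hsupp : {β | coeff β f ≠ 0}.Nonempty := by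
    by_contra! h
    exact hf (ext fun β => by simpa using Set.eq_empty_iff_forall_notMem.1 h β)
  obtain ⟨α, hα, hmin⟩ := (InvImage.wf m.toSyn wellFounded_lt).has_min _ hsupp
  exact ⟨α, hα, fun β hβ => not_lt.1 (hmin β hβ)⟩

theorem IsInitialExp.monomial_one_mul {f : MvPowerSeries σ R} {α : σ →₀ ℕ}
    (hf : m.IsInitialExp f α) (γ : σ →₀ ℕ) : m.IsInitialExp (monomial γ 1 * f) (γ + α) := by
  refine ⟨by simpa [coeff_add_monomial_mul] using hf.1, fun β hβ => ?_⟩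
  rw [coeff_monomial_mul] at hβ
  split_ifs at hβ with hγβ
  · rw [← add_tsub_cancel_of_le hγβ, map_add, map_add]
    exact add_le_add_right (hf.2 _ (by simpa using hβ)) _
  · exact absurd rfl hβ

theorem isUpperSet_initialDiagram (I : Ideal (MvPowerSeries σ R)) :
    IsUpperSet (m.initialDiagram I) := by
  rintro α β hαβ ⟨f, hfI, hf⟩
  rw [← add_tsub_cancel_of_le hαβ, add_comm]
  exact ⟨_, I.mul_mem_left _ hfI, hf.monomial_one_mul (β - α)⟩

theorem mem_initialDiagram_of_mem_initialIdeal {I : Ideal (MvPowerSeries σ R)}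
    {g : MvPowerSeries σ R} (hg : g ∈ m.initialIdeal I) {β : σ →₀ ℕ} (hβ : coeff β g ≠ 0) :
    β ∈ m.initialDiagram I := by
  classical
  induction hg using Submodule.span_induction generalizing β with
  | mem x hx =>
    obtain ⟨f, hfI, α, hf, rfl⟩ := hx
    rw [coeff_monomial] at hβ
    split_ifs at hβ with h
    · exact h ▸ ⟨f, hfI, hf⟩
    · exact absurd rfl hβ
  | zero => simp at hβ
  | add x y _ _ hx hy =>
    rw [map_add] at hβ
    by_cases hxβ : coeff β x = 0
    · exact hy (by simpa [hxβ] using hβ)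
    · exact hx hxβ
  | smul r x _ hx =>
    rw [smul_eq_mul, coeff_mul] at hβ
    obtain ⟨p, hp, hpβ⟩ := Finset.exists_ne_zero_of_sum_ne_zero hβ
    rw [Finset.HasAntidiagonal.mem_antidiagonal] at hp
    exact isUpperSet_initialDiagram I (hp ▸ le_add_self) (hx (right_ne_zero_of_mul hpβ))

theorem initialDiagram_initialIdeal (I : Ideal (MvPowerSeries σ R)) :
    m.initialDiagram (m.initialIdeal I) = m.initialDiagram I := by
  classical
  ext α
  refine ⟨fun ⟨g, hg, hgα⟩ => mem_initialDiagram_of_mem_initialIdeal hg hgα.1, ?_⟩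
  rintro ⟨f, hfI, hf⟩
  refine ⟨_, Ideal.subset_span ⟨f, hfI, α, hf, rfl⟩, by simpa using hf.1, fun β hβ => ?_⟩
  rw [coeff_monomial] at hβ
  split_ifs at hβ with h
  · rw [h]
  · exact absurd rfl hβ

end CommSemiring

theorem eq_zero_of_mem_sup_idealOfVars_pow {m : MonomialOrder σ} {R : Type*} [CommRing R]
    (hm : ∀ {α β : σ →₀ ℕ}, α ≼[m] β → α.degree ≤ β.degree) {I : Ideal (MvPowerSeries σ R)}
    {k : ℕ} {p : MvPowerSeries σ R} (hp : p ∈ I ⊔ idealOfVars σ R ^ (k + 1))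
    (hsupp : ∀ β, coeff β p ≠ 0 → β ∉ m.initialDiagram I ∧ β.degree ≤ k) : p = 0 := by
  by_contra hp0
  obtain ⟨α, hα, hαmin⟩ := exists_isInitialExp (m := m) hp0
  obtain ⟨g, hg, h, hh, rfl⟩ := Submodule.mem_sup.1 hp
  have hh0 (β : σ →₀ ℕ) (hβ : β.degree ≤ k) : coeff β h = 0 :=
    coeff_of_lt_order ((Nat.cast_lt.2 (Nat.lt_succ_of_le hβ)).trans_le
      (le_order_of_mem_idealOfVars_pow hh))
  have hαk := (hsupp α hα).2
  -- `g` has the same initial exponent `α` as `g + h`, since `h` has no terms of degree `≤ k`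
  refine (hsupp α hα).1 ⟨g, hg, by simpa [hh0 α hαk] using hα, fun β hβ => ?_⟩
  by_contra! hβα
  exact hβα.not_ge (hαmin β (by simpa [hh0 β ((hm hβα.le).trans hαk)] using hβ))

section Field

variable {K : Type*} [Field K]

theorem IsInitialExp.lt_of_coeff_sub_smul_ne_zero {m : MonomialOrder σ} {g : MvPowerSeries σ K}
    {α : σ →₀ ℕ} (hg : m.IsInitialExp g α) (c : K) {β : σ →₀ ℕ}
    (hβ : coeff β (monomial α c - (c / coeff α g) • g) ≠ 0) : α ≺[m] β := by
  classical
  rw [map_sub, map_smul, coeff_monomial, smul_eq_mul] at hβ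
  refine lt_of_le_of_ne ?_ fun h => ?_
  · by_cases hgβ : coeff β g = 0
    · rw [hgβ, mul_zero, sub_zero] at hβ
      split_ifs at hβ with h
      · rw [h]
      · exact absurd rfl hβ
    · exact hg.2 β hgβ
  · obtain rfl := m.toSyn.injective h
    simp [div_mul_cancel₀ _ hg.1] at hβ

variable (m : MonomialOrder σ) (I : Ideal (MvPowerSeries σ K)) (k : ℕ)

noncomputable def standardMonomial (α : {α // α ∉ m.initialDiagram I ∧ α.degree ≤ k}) :
    MvPowerSeries σ K ⧸ (I ⊔ idealOfVars σ K ^ (k + 1)) :=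
  Ideal.Quotient.mkₐ K _ (monomial α.1 1)

variable {m}

theorem linearIndependent_standardMonomial
    (hm : ∀ {α β : σ →₀ ℕ}, α ≼[m] β → α.degree ≤ β.degree) :
    LinearIndependent K (m.standardMonomial I k) := by
  classical
  rw [linearIndependent_iff']
  intro s c hc i hi
  let p : MvPowerSeries σ K := ∑ j ∈ s, monomial j.1 (c j)
  have hcoeff (β : σ →₀ ℕ) : coeff β p = ∑ j ∈ s, if β = j.1 then c j else 0 := by
    simp [p, coeff_monomial]
  have hp : p ∈ I ⊔ idealOfVars σ K ^ (k + 1) := by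
    rw [← Ideal.Quotient.eq_zero_iff_mem, ← Ideal.Quotient.mkₐ_eq_mk K, ← hc, map_sum]
    refine Finset.sum_congr rfl fun j _ => ?_
    rw [standardMonomial, ← map_smul, ← map_smul, smul_eq_mul, mul_one]
  have hp0 : p = 0 := eq_zero_of_mem_sup_idealOfVars_pow hm hp fun β hβ => by
    obtain ⟨j, -, hj⟩ := Finset.exists_ne_zero_of_sum_ne_zero (hcoeff β ▸ hβ)
    split_ifs at hj with h
    · exact h ▸ j.2
    · exact absurd rfl hj
  simpa [hp0, Subtype.val_inj, hi] using (hcoeff i.1).symm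

variable [Finite σ]

theorem mkₐ_monomial_mem_span_standardMonomial (α : σ →₀ ℕ) (c : K) :
    Ideal.Quotient.mkₐ K _ (monomial α c) ∈
      Submodule.span K (Set.range (m.standardMonomial I k)) := by
  set V := Submodule.span K (Set.range (m.standardMonomial I k))
  rcases lt_or_ge k α.degree with hk | hk
  · rw [Ideal.Quotient.mkₐ_eq_mk, Ideal.Quotient.eq_zero_iff_mem.2 (Ideal.mem_sup_right ?_)]
    · exact V.zero_mem
    refine mem_idealOfVars_pow_iff.2 (nat_le_order fun β hβ => ?_)
    classical
    rw [coeff_monomial, if_neg]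
    rintro rfl
    omega
  have hwf : {β : σ →₀ ℕ | β.degree ≤ k}.WellFoundedOn (fun β γ => γ ≺[m] β) :=
    Set.wellFoundedOn_image.1 <|
      ((finite_of_degree_le k).image m.toSyn).wellFoundedOn (r := (· > ·))
  revert c
  refine hwf.induction (P := fun α => ∀ c : K, Ideal.Quotient.mkₐ K _ (monomial α c) ∈ V) hk
    fun α hαk ih c => ?_
  by_cases hα : α ∈ m.initialDiagram I
  · obtain ⟨g, hgI, hg⟩ := hα
    have hmk : Ideal.Quotient.mkₐ K (I ⊔ idealOfVars σ K ^ (k + 1)) (monomial α c) =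
        Ideal.Quotient.mkₐ K _ (monomial α c - (c / coeff α g) • g) := by
      refine Ideal.Quotient.mk_eq_mk_iff_sub_mem _ _ |>.2 (Ideal.mem_sup_left ?_)
      simpa using Submodule.smul_of_tower_mem I (c / coeff α g) hgI
    rw [hmk]
    refine mkₐ_mem_of_forall_mkₐ_monomial_mem le_sup_right fun β hβk => ?_
    by_cases hβ : coeff β (monomial α c - (c / coeff α g) • g) = 0
    · simp [hβ]
    · exact ih β hβk (hg.lt_of_coeff_sub_smul_ne_zero c hβ) _
  · rw [← mul_one c, ← smul_eq_mul, map_smul, map_smul]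
    exact V.smul_mem c (Submodule.subset_span ⟨⟨α, hα, hαk⟩, rfl⟩)

theorem top_le_span_standardMonomial :
    ⊤ ≤ Submodule.span K (Set.range (m.standardMonomial I k)) := by
  rintro x -
  obtain ⟨f, rfl⟩ := Ideal.Quotient.mkₐ_surjective K _ x
  exact mkₐ_mem_of_forall_mkₐ_monomial_mem le_sup_right fun β _ =>
    mkₐ_monomial_mem_span_standardMonomial I k β _

theorem finrank_quotient_sup_idealOfVars_pow
    (hm : ∀ {α β : σ →₀ ℕ}, α ≼[m] β → α.degree ≤ β.degree) :
    Module.finrank K (MvPowerSeries σ K ⧸ (I ⊔ idealOfVars σ K ^ (k + 1))) =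
      {α | α ∉ m.initialDiagram I ∧ α.degree ≤ k}.ncard := by
  rw [Module.finrank_eq_nat_card_basis
    (.mk (linearIndependent_standardMonomial I k hm) (top_le_span_standardMonomial I k))]
  exact Nat.card_coe_set_eq _

end Field

theorem degLex_le_iff_prodLex [LinearOrder σ] [WellFoundedGT σ] {α β : σ →₀ ℕ} :
    α ≼[degLex] β ↔
      (toLex (α.degree, toLex ⇑α) : ℕ ×ₗ Lex (σ → ℕ)) ≤ toLex (β.degree, toLex ⇑β) := by
  rw [degLex_le_iff, Finsupp.DegLex.le_iff, Prod.Lex.toLex_le_toLex]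
  rfl

end MonomialOrder

/-- For an ideal `I` of `R = K[[x₁,…,x_n]]`, with monomials ordered
lexicographically by `(|α|, α₁, …, α_n)`: for every `k`, the Hilbert–Samuel
function `H_I(k) := dim_K R/(I + 𝔫^{k+1})` satisfies `H_I(k) = H_{mon(I)}(k)`,
and this equals the number of exponents `α ∉ N(I)` with `|α| ≤ k`, where
`N(I)` is the diagram of initial exponents of `I` and `mon(I)` the ideal of
initial monomials. -/
theorem stmt_8 (K : Type*) [Field K] (n : ℕ)
    (I : Ideal (MvPowerSeries (Fin n) K)) :
    let R := MvPowerSeries (Fin n) K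
    let nn : Ideal R := Ideal.span (Set.range (X : Fin n → R))
    let deg : (Fin n →₀ ℕ) → ℕ := fun α => α.sum fun _ v => v
    let keyle : (Fin n →₀ ℕ) → (Fin n →₀ ℕ) → Prop := fun α β =>
      (toLex (deg α, toLex ⇑α) : ℕ ×ₗ Lex (Fin n → ℕ)) ≤ toLex (deg β, toLex ⇑β)
    let isExp : R → (Fin n →₀ ℕ) → Prop := fun f α =>
      coeff α f ≠ 0 ∧ ∀ β, coeff β f ≠ 0 → keyle α β
    let NI : Set (Fin n →₀ ℕ) := {α | ∃ f ∈ I, isExp f α}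
    let monI : Ideal R :=
      Ideal.span {g | ∃ f ∈ I, ∃ α, isExp f α ∧ g = monomial α (coeff α f)}
    let HS : Ideal R → ℕ → ℕ := fun J k =>
      Module.finrank K (R ⧸ (J ⊔ nn ^ (k + 1)))
    ∀ k : ℕ, HS I k = HS monI k ∧
      HS I k = Set.ncard {α : Fin n →₀ ℕ | α ∉ NI ∧ deg α ≤ k} := by
  intro R nn deg keyle isExp NI monI HS k
  have hExp : isExp = MonomialOrder.degLex.IsInitialExp := by
    funext f α
    simp only [isExp, keyle, deg, MonomialOrder.IsInitialExp, MonomialOrder.degLex_le_iff_prodLex]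
    rfl
  have hNI : NI = MonomialOrder.degLex.initialDiagram I := by simp only [NI, hExp]; rfl
  have hmonI : monI = MonomialOrder.degLex.initialIdeal I := by simp only [monI, hExp]; rfl
  have hHS (J : Ideal R) :
      HS J k = {α | α ∉ MonomialOrder.degLex.initialDiagram J ∧ α.degree ≤ k}.ncard :=
    MonomialOrder.finrank_quotient_sup_idealOfVars_pow J k fun h => DegLex.monotone_degree h
  exact ⟨by rw [hHS, hHS, hmonI, MonomialOrder.initialDiagram_initialIdeal],
    by rw [hHS, hNI]; rfl⟩
end

section
/- In the polynomial ring K[x1, x2, y, z] over a field, the ideal of initial monomials of I = (x1, y) ∩ (x2, x1 + y·z) is (x1, x2·y), with respect to the monomial ordering induced by (|α|, α1, α2, α3, α4) lexicographically (variables ordered x1, x2, y, z). -/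
/-!
Every monomial of an element of `(x₁, y)` is divisible by `x₁` or by `y`, so the initial
monomial `x^α` of `f ∈ I` lies in `(x₁, x₂y)` unless `α₁ = α₂ = 0`. This case is excluded by the
substitution `ψ : x₁ ↦ -yz, x₂ ↦ 0`: it kills `(x₂, x₁ + yz)`, hence `f`, while it fixes the
monomials free of `x₁, x₂` and sends every other monomial `x^β` of `f` to `0` or to
`±y^(β₁+β₃) z^(β₁+β₄)`, of degree `|β| + β₁`. So `x^α`, of least degree in `f`, keeps its
coefficient in `ψ f = 0`. Conversely `x₁` and `x₂y` are the initial monomials of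
`x₁ + yz` and `x₂y`.
-/

open MvPolynomial

lemma X_mul_X_eq_monomial {σ R : Type*} [CommSemiring R] (i j : σ) :
    (X i * X j : MvPolynomial σ R) = monomial (Finsupp.single i 1 + Finsupp.single j 1) 1 := by
  rw [monomial_single_add, pow_one]
  rfl

section Retraction

variable {R : Type*} [CommRing R]

noncomputable def retractYZ : MvPolynomial (Fin 4) R →ₐ[R] MvPolynomial (Fin 4) R :=
  aeval ![-(X 2 * X 3), 0, X 2, X 3]

lemma retractYZ_eq_zero_of_mem {f : MvPolynomial (Fin 4) R}
    (hf : f ∈ Ideal.span {X 1, X 0 + X 2 * X 3}) : retractYZ f = 0 := by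
  obtain ⟨a, b, rfl⟩ := Ideal.mem_span_pair.mp hf
  simp [retractYZ]

lemma retractYZ_monomial {β : Fin 4 →₀ ℕ} (hβ : β 1 = 0) (c : R) :
    retractYZ (monomial β c) =
      monomial (Finsupp.single 2 (β 0 + β 2) + Finsupp.single 3 (β 0 + β 3)) ((-1) ^ β 0 * c) := by
  rw [retractYZ, aeval_monomial, Finsupp.prod_fintype _ _ (fun _ => pow_zero _), Fin.prod_univ_four]
  simp only [Matrix.cons_val_zero, Matrix.cons_val_one, Matrix.cons_val_two, Matrix.cons_val_three,
    Matrix.head_cons, Matrix.tail_cons, hβ, pow_zero, mul_one]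
  rw [monomial_eq, Finsupp.prod_add_index (by simp) (fun _ _ _ _ => pow_add _ _ _),
    Finsupp.prod_single_index (pow_zero (X 2)), Finsupp.prod_single_index (pow_zero (X 3)),
    algebraMap_eq, C_mul, C_pow, C_neg, C_1]
  ring

lemma retractYZ_monomial_of_ne_zero {β : Fin 4 →₀ ℕ} (hβ : β 1 ≠ 0) (c : R) :
    retractYZ (monomial β c) = 0 := by
  rw [retractYZ, aeval_monomial, Finsupp.prod_fintype _ _ (fun _ => pow_zero _), Fin.prod_univ_four]
  simp [hβ]

lemma coeff_retractYZ_monomial {α β : Fin 4 →₀ ℕ} (hα0 : α 0 = 0) (hα1 : α 1 = 0)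
    (hdeg : α.degree ≤ β.degree) (c : R) :
    coeff α (retractYZ (monomial β c)) = if β = α then c else 0 := by
  by_cases hβ1 : β 1 = 0
  · rw [retractYZ_monomial hβ1, coeff_monomial]
    by_cases hβα : β = α
    · subst hβα
      rw [if_pos, if_pos rfl, hα0, pow_zero, one_mul]
      ext i
      fin_cases i <;> simp [hα0, hα1]
    · rw [if_neg, if_neg hβα]
      intro hψβ
      have h2 := DFunLike.congr_fun hψβ 2
      have h3 := DFunLike.congr_fun hψβ 3
      simp at h2 h3
      simp only [α.degree_eq_sum, β.degree_eq_sum, Fin.sum_univ_four] at hdeg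
      apply hβα
      ext i
      fin_cases i <;> simp <;> omega
  · rw [retractYZ_monomial_of_ne_zero hβ1, coeff_zero, if_neg]
    rintro rfl
    exact hβ1 hα1

lemma coeff_retractYZ_of_forall_degree_le {f : MvPolynomial (Fin 4) R} {α : Fin 4 →₀ ℕ}
    (hα0 : α 0 = 0) (hα1 : α 1 = 0) (hmin : ∀ β, coeff β f ≠ 0 → α.degree ≤ β.degree) :
    coeff α (retractYZ f) = coeff α f := by
  conv_lhs => rw [f.as_sum, map_sum, coeff_sum]
  rw [Finset.sum_congr rfl fun β hβ =>
      coeff_retractYZ_monomial hα0 hα1 (hmin β (mem_support_iff.mp hβ)) _,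
    Finset.sum_ite_eq', ite_eq_left_iff, eq_comm]
  exact notMem_support_iff.mp

lemma exponent_cases_of_mem_inf {f : MvPolynomial (Fin 4) R} {α : Fin 4 →₀ ℕ}
    (hf : f ∈ Ideal.span {X 0, X 2} ⊓ Ideal.span {X 1, X 0 + X 2 * X 3}) (hα : coeff α f ≠ 0)
    (hmin : ∀ β, coeff β f ≠ 0 → α.degree ≤ β.degree) :
    α 0 ≠ 0 ∨ α 1 ≠ 0 ∧ α 2 ≠ 0 := by
  have h02 : α 0 ≠ 0 ∨ α 2 ≠ 0 := by
    have hf1 : f ∈ Ideal.span (X '' {0, 2}) := by rw [Set.image_pair]; exact hf.1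
    simpa using mem_ideal_span_X_image.mp hf1 α (mem_support_iff.mpr hα)
  by_contra! h
  have hα1 : α 1 = 0 := by omega
  apply hα
  rw [← coeff_retractYZ_of_forall_degree_le h.1 hα1 hmin, retractYZ_eq_zero_of_mem hf.2, coeff_zero]

end Retraction

section Generators

variable {R : Type*} [CommSemiring R]

lemma monomial_mem_span_X0_X1_mul_X2 {α : Fin 4 →₀ ℕ} (h : α 0 ≠ 0 ∨ α 1 ≠ 0 ∧ α 2 ≠ 0)
    (c : R) : monomial α c ∈ Ideal.span {X 0, X 1 * X 2} := by
  rcases h with h0 | ⟨h1, h2⟩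
  · exact Ideal.mem_of_dvd _ (X_dvd_monomial.mpr (Or.inr h0)) (Ideal.subset_span (by simp))
  · refine Ideal.mem_of_dvd _ ?_ (Ideal.subset_span (Set.mem_insert_of_mem _ rfl))
    rw [X_mul_X_eq_monomial, monomial_dvd_monomial]
    refine ⟨Or.inr (Finsupp.le_def.mpr fun i => ?_), one_dvd c⟩
    fin_cases i <;> simp <;> omega

lemma X0_add_X2_mul_X3_eq :
    (X 0 + X 2 * X 3 : MvPolynomial (Fin 4) R) =
      monomial (Finsupp.single 0 1) 1 + monomial (Finsupp.single 2 1 + Finsupp.single 3 1) 1 := by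
  rw [X_mul_X_eq_monomial, X]

lemma coeff_single_zero_X0_add_X2_mul_X3 :
    coeff (Finsupp.single 0 1) (X 0 + X 2 * X 3 : MvPolynomial (Fin 4) R) = 1 := by
  rw [X0_add_X2_mul_X3_eq, coeff_add, coeff_monomial, coeff_monomial, if_pos rfl, if_neg, add_zero]
  intro h
  simpa using DFunLike.congr_fun h 0

lemma toLex_single_zero_le_of_coeff_X0_add_X2_mul_X3 {β : Fin 4 →₀ ℕ}
    (hβ : coeff β (X 0 + X 2 * X 3 : MvPolynomial (Fin 4) R) ≠ 0) :
    (toLex ((Finsupp.single 0 1 : Fin 4 →₀ ℕ).degree, toLex ⇑(Finsupp.single 0 1 : Fin 4 →₀ ℕ)) :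
      ℕ ×ₗ Lex (Fin 4 → ℕ)) ≤ toLex (β.degree, toLex ⇑β) := by
  rw [X0_add_X2_mul_X3_eq, coeff_add, coeff_monomial, coeff_monomial] at hβ
  by_cases h0 : Finsupp.single 0 1 = β
  · rw [h0]
  · have h23 : Finsupp.single 2 1 + Finsupp.single 3 1 = β := by
      by_contra h23
      rw [if_neg h0, if_neg h23, add_zero] at hβ
      exact hβ rfl
    subst h23
    exact (Prod.Lex.toLex_lt_toLex.mpr (Or.inl (by simp))).le

end Generators

/-- In `R = K[x₁, x₂, y, z]` (variables `X 0 = x₁`, `X 1 = x₂`, `X 2 = y`,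
`X 3 = z`), the ideal of initial monomials of `I = (x₁, y) ∩ (x₂, x₁ + y·z)`,
with respect to the ordering of exponents by `(|α|, α₁, α₂, α₃, α₄)`
lexicographically, is `(x₁, x₂·y)`. -/
theorem stmt_9 (K : Type*) [Field K] :
    let R := MvPolynomial (Fin 4) K
    let deg : (Fin 4 →₀ ℕ) → ℕ := fun α => α.sum fun _ v => v
    let keyle : (Fin 4 →₀ ℕ) → (Fin 4 →₀ ℕ) → Prop := fun α β =>
      (toLex (deg α, toLex ⇑α) : ℕ ×ₗ Lex (Fin 4 → ℕ)) ≤ toLex (deg β, toLex ⇑β)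
    let isExp : R → (Fin 4 →₀ ℕ) → Prop := fun f α =>
      coeff α f ≠ 0 ∧ ∀ β, coeff β f ≠ 0 → keyle α β
    let I : Ideal R := Ideal.span {X 0, X 2} ⊓ Ideal.span {X 1, X 0 + X 2 * X 3}
    let monI : Ideal R :=
      Ideal.span {g | ∃ f ∈ I, ∃ α, isExp f α ∧ g = monomial α (coeff α f)}
    monI = Ideal.span {X 0, X 1 * X 2} := by
  intro R deg keyle isExp I monI
  apply le_antisymm
  · refine Ideal.span_le.mpr ?_
    rintro _ ⟨f, hf, α, ⟨hα, hmin⟩, rfl⟩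
    exact monomial_mem_span_X0_X1_mul_X2 (exponent_cases_of_mem_inf hf hα
      fun β hβ => Prod.Lex.monotone_fst _ _ (hmin β hβ)) _
  · have hx₁ : X 0 + X 2 * X 3 ∈ I :=
      ⟨Ideal.mem_span_pair.mpr ⟨1, X 3, by ring⟩, Ideal.mem_span_pair.mpr ⟨0, 1, by ring⟩⟩
    have hx₂y : X 1 * X 2 ∈ I :=
      ⟨Ideal.mem_span_pair.mpr ⟨0, X 1, by ring⟩, Ideal.mem_span_pair.mpr ⟨X 2, 0, by ring⟩⟩
    have hx₁c : coeff (Finsupp.single 0 1) (X 0 + X 2 * X 3 : R) = 1 :=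
      coeff_single_zero_X0_add_X2_mul_X3
    have hx₂yc : coeff (Finsupp.single 1 1 + Finsupp.single 2 1) (X 1 * X 2 : R) = 1 := by
      rw [X_mul_X_eq_monomial, coeff_monomial, if_pos rfl]
    rw [Ideal.span_le, Set.insert_subset_iff, Set.singleton_subset_iff]
    refine ⟨Ideal.subset_span ⟨_, hx₁, Finsupp.single 0 1, ⟨by simp [hx₁c], fun β hβ => ?_⟩,
        by rw [hx₁c]; rfl⟩,
      Ideal.subset_span ⟨_, hx₂y, Finsupp.single 1 1 + Finsupp.single 2 1,
        ⟨by simp [hx₂yc], fun β hβ => ?_⟩, by rw [hx₂yc, X_mul_X_eq_monomial]⟩⟩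
    · exact toLex_single_zero_le_of_coeff_X0_add_X2_mul_X3 hβ
    · rw [X_mul_X_eq_monomial, coeff_monomial] at hβ
      obtain rfl : _ = β := of_not_not fun h => hβ (if_neg h)
      exact le_rfl
end

section
/- Let H_{p,q} denote the Hilbert-Samuel function of the ideal (x1⋯xp, y1⋯yq) in K[[x1,...,xp, y1,...,y_{n-p}]] with p + q ≤ n. Then H_{p,q} ≤ H_{p',q'} (pointwise) whenever p ≤ p' and q ≤ q', with p'+q' ≤ n. -/
/-!
Let `m` be the ideal of the variables. A permutation of the variables sending the `x`-block of
`(p, q)` into the `x`-block of `(p', q')` and its `y`-block into the `y`-block of `(p', q')` is a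
ring automorphism fixing `m`. It carries the ideal of `(p, q)` onto an ideal that contains the
ideal of `(p', q')`, because every variable dividing an old generator divides the corresponding
new one. Both quotients are finite-dimensional since the ideals contain `m ^ (k + 1)`, so the
quotient by the larger ideal has the smaller dimension.
-/

open MvPowerSeries

namespace MvPowerSeries

variable {σ τ R : Type*} [CommRing R]

theorem map_toAdicCompletion_span_range_X [Finite σ] :
    (Ideal.span (Set.range X)).map (toAdicCompletionAlgEquiv σ R).toRingEquiv =
      (MvPolynomial.idealOfVars σ R).map (algebraMap _ _) := by
  have : ⇑(toAdicCompletionAlgEquiv σ R) ∘ X =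
      algebraMap (MvPolynomial σ R) _ ∘ MvPolynomial.X := funext fun i => by
    rw [Function.comp_apply, Function.comp_apply, toAdicCompletionAlgEquiv_apply,
      ← MvPolynomial.coe_X, toAdicCompletion_coe, AdicCompletion.algebraMap_apply,
      Algebra.algebraMap_self_apply]
  rw [Ideal.map_span, Ideal.map_span, ← Set.range_comp, ← Set.range_comp]
  exact congrArg (Ideal.span ∘ Set.range) this

/- In the adic completion of `R[X]` at `I = idealOfVars`, the kernel of the projection to
`R[X] ⧸ I ^ j` is `I ^ j` times the completion. -/
theorem mem_span_range_X_pow_of_coeff_eq_zero [Finite σ] {f : MvPowerSeries σ R} {j : ℕ}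
    (hf : ∀ d : σ →₀ ℕ, d.degree < j → coeff d f = 0) :
    f ∈ Ideal.span (Set.range X) ^ j := by
  set e := (toAdicCompletionAlgEquiv σ R).toRingEquiv
  have htrunc : truncTotal j f = 0 := by
    ext d
    rw [coeff_truncTotal_eq_ite]
    split_ifs with h <;> simp [hf d, h]
  have hker : e f ∈ MvPolynomial.idealOfVars σ R ^ j • (⊤ : Submodule (MvPolynomial σ R) _) := by
    rw [AdicCompletion.pow_smul_top_eq_ker_eval (MvPolynomial.idealOfVars_fg σ R)]
    show (toAdicCompletion σ R f).val j = 0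
    rw [toAdicCompletion_apply_eq_mk_truncTotal, htrunc, map_zero]
  rw [Ideal.smul_top_eq_map, Submodule.restrictScalars_mem, Ideal.map_pow,
    ← map_toAdicCompletion_span_range_X, ← Ideal.map_pow] at hker
  exact Ideal.apply_mem_of_equiv_iff.mp hker

theorem finite_quotient_of_span_range_X_pow_le [Finite σ] {I : Ideal (MvPowerSeries σ R)} {j : ℕ}
    (hI : Ideal.span (Set.range X) ^ j ≤ I) : Module.Finite R (MvPowerSeries σ R ⧸ I) := by
  classical
  set s := (Finsupp.finite_of_degree_lt (σ := σ) j).toFinset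
  set π := Ideal.Quotient.mkₐ R I
  refine ⟨⟨s.image fun d => π (monomial d 1), eq_top_iff.mpr fun x _ => ?_⟩⟩
  obtain ⟨f, rfl⟩ := Ideal.Quotient.mkₐ_surjective R I x
  have hf : π f = π (truncTotal j f) := by
    refine Ideal.Quotient.mk_eq_mk_iff_sub_mem _ _ |>.mpr (hI ?_)
    refine mem_span_range_X_pow_of_coeff_eq_zero fun d hd => ?_
    rw [map_sub, MvPolynomial.coeff_coe, coeff_truncTotal _ hd, sub_self]
  rw [hf, ← MvPolynomial.coeToMvPowerSeries.ringHom_apply, truncTotal, truncFinset_apply,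
    map_sum, map_sum]
  refine Submodule.sum_mem _ fun d hd => ?_
  rw [MvPolynomial.coeToMvPowerSeries.ringHom_apply, MvPolynomial.coe_monomial,
    ← mul_one (coeff d f), ← smul_eq_mul, map_smul, map_smul]
  exact Submodule.smul_mem _ _ (Submodule.subset_span (Finset.mem_image_of_mem _ hd))

theorem renameEquiv_prod_X (e : σ ≃ τ) (s : Finset σ) :
    renameEquiv R e (∏ i ∈ s, X i) = ∏ i ∈ s.map e.toEmbedding, X i := by
  simp [map_prod, rename_X]

theorem map_renameEquiv_span_range_X (e : σ ≃ τ) :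
    (Ideal.span (Set.range X)).map (renameEquiv R e) = Ideal.span (Set.range X) := by
  rw [Ideal.map_span, ← Set.range_comp]
  have : ⇑(renameEquiv R e) ∘ X = X ∘ e := funext fun i => rename_X e i
  rw [this, e.surjective.range_comp]

variable (R) in
noncomputable def monomialPairIdeal (A B : Finset σ) (k : ℕ) : Ideal (MvPowerSeries σ R) :=
  Ideal.span {∏ i ∈ A, X i, ∏ i ∈ B, X i} ⊔ Ideal.span (Set.range X) ^ (k + 1)

theorem monomialPairIdeal_le_of_subset {A B A' B' : Finset σ} (hA : A ⊆ A') (hB : B ⊆ B')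
    (k : ℕ) : monomialPairIdeal R A' B' k ≤ monomialPairIdeal R A B k := by
  refine sup_le_sup_right (Ideal.span_le.mpr ?_) _
  rintro x (rfl | rfl)
  · exact Ideal.mem_of_dvd _ (Finset.prod_dvd_prod_of_subset _ _ _ hA) (Ideal.subset_span (by simp))
  · exact Ideal.mem_of_dvd _ (Finset.prod_dvd_prod_of_subset _ _ _ hB) (Ideal.subset_span (by simp))

theorem map_renameEquiv_monomialPairIdeal (e : σ ≃ τ) (A B : Finset σ) (k : ℕ) :
    (monomialPairIdeal R A B k).map (renameEquiv R e) =
      monomialPairIdeal R (A.map e.toEmbedding) (B.map e.toEmbedding) k := by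
  rw [monomialPairIdeal, Ideal.map_sup, Ideal.map_pow, map_renameEquiv_span_range_X,
    Ideal.map_span, Set.image_pair, renameEquiv_prod_X, renameEquiv_prod_X, monomialPairIdeal]

end MvPowerSeries

theorem finrank_quotient_le_of_le {K A : Type*} [Field K] [CommRing A] [Algebra K A]
    {I J : Ideal A} (h : I ≤ J) [Module.Finite K (A ⧸ I)] :
    Module.finrank K (A ⧸ J) ≤ Module.finrank K (A ⧸ I) :=
  LinearMap.finrank_le_finrank_of_surjective (f := (Ideal.Quotient.factorₐ K h).toLinearMap)
    (Ideal.Quotient.factor_surjective h)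

theorem finrank_quotient_monomialPairIdeal_le {σ K : Type*} [Finite σ] [Field K]
    (e : Equiv.Perm σ) {A B A' B' : Finset σ} (hA : A.map e.toEmbedding ⊆ A')
    (hB : B.map e.toEmbedding ⊆ B') (k : ℕ) :
    Module.finrank K (MvPowerSeries σ K ⧸ monomialPairIdeal K A B k) ≤
      Module.finrank K (MvPowerSeries σ K ⧸ monomialPairIdeal K A' B' k) := by
  have : Module.Finite K (MvPowerSeries σ K ⧸ monomialPairIdeal K A' B' k) :=
    finite_quotient_of_span_range_X_pow_le le_sup_right
  calc Module.finrank K (MvPowerSeries σ K ⧸ monomialPairIdeal K A B k)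
      = Module.finrank K (MvPowerSeries σ K ⧸
          monomialPairIdeal K (A.map e.toEmbedding) (B.map e.toEmbedding) k) :=
        (Ideal.quotientEquivAlg _ _ (renameEquiv K e)
          (map_renameEquiv_monomialPairIdeal e A B k).symm).toLinearEquiv.finrank_eq
    _ ≤ _ := finrank_quotient_le_of_le (monomialPairIdeal_le_of_subset hA hB k)

theorem exists_perm_map_blocks_subset {n p q p' q' : ℕ} (h : p' + q' ≤ n) (hp : p ≤ p')
    (hq : q ≤ q') : ∃ e : Equiv.Perm (Fin n),
      (Finset.univ.filter fun i : Fin n => (i : ℕ) < p).map e.toEmbedding ⊆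
        Finset.univ.filter (fun i : Fin n => (i : ℕ) < p') ∧
      (Finset.univ.filter fun i : Fin n => p ≤ (i : ℕ) ∧ (i : ℕ) < p + q).map e.toEmbedding ⊆
        Finset.univ.filter (fun i : Fin n => p' ≤ (i : ℕ) ∧ (i : ℕ) < p' + q') := by
  let shift (i : Fin (p + q)) : ℕ := if (i : ℕ) < p then i else i + (p' - p)
  have hshift (i : Fin (p + q)) : shift i < n := by grind
  have hinj : Function.Injective fun i => (⟨shift i, hshift i⟩ : Fin n) := by
    intro i j hij
    simp only [Fin.mk.injEq, shift] at hij
    grind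
  obtain ⟨e, he⟩ := Equiv.Perm.exists_extending_pair _ _ (Fin.castLE_injective (by omega)) hinj
  have he' (i : Fin n) (hi : (i : ℕ) < p + q) : (e i : ℕ) = shift ⟨i, hi⟩ :=
    congrArg Fin.val (he ⟨i, hi⟩)
  refine ⟨e, ?_, ?_⟩ <;>
  · intro j hj
    obtain ⟨i, hi, rfl⟩ := Finset.mem_map.mp hj
    simp only [Finset.mem_filter, Finset.mem_univ, true_and, Equiv.toEmbedding_apply] at hi ⊢
    rw [he' i (by omega)]
    grind

theorem stmt_19_general (K : Type*) [Field K] (n p q p' q' : ℕ)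
    (hpq' : p' + q' ≤ n) (hp : p ≤ p') (hq : q ≤ q') :
    let R := MvPowerSeries (Fin n) K
    let m : Ideal R := Ideal.span (Set.range (X : Fin n → R))
    let Px : ℕ → R := fun a => ∏ i ∈ Finset.univ.filter (fun i : Fin n => (i : ℕ) < a), X i
    let Py : ℕ → ℕ → R := fun a b =>
      ∏ i ∈ Finset.univ.filter (fun i : Fin n => a ≤ (i : ℕ) ∧ (i : ℕ) < a + b), X i
    let H : ℕ → ℕ → ℕ → ℕ := fun a b k =>
      Module.finrank K (R ⧸ (Ideal.span {Px a, Py a b} ⊔ m ^ (k + 1)))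
    ∀ k, H p q k ≤ H p' q' k := by
  intro R m Px Py H k
  obtain ⟨e, hx, hy⟩ := exists_perm_map_blocks_subset hpq' hp hq
  exact finrank_quotient_monomialPairIdeal_le e hx hy k

/-- Let `H_{p,q}` be the Hilbert–Samuel function of the ideal
`(x₁⋯x_p, y₁⋯y_q)` in `K[[x₁,…,x_p, y₁,…,y_{n-p}]]` (variables indexed by
`Fin n`, the `x`-block being the first `p` variables and the `y`-block the
next `q`).  Then `H_{p,q}(k) ≤ H_{p',q'}(k)` for all `k` whenever
`p ≤ p'`, `q ≤ q'` and `p' + q' ≤ n`. -/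
theorem stmt_19 (K : Type*) [Field K] (n p q p' q' : ℕ)
    (hpq : p + q ≤ n) (hpq' : p' + q' ≤ n) (hp : p ≤ p') (hq : q ≤ q') :
    let R := MvPowerSeries (Fin n) K
    let m : Ideal R := Ideal.span (Set.range (X : Fin n → R))
    let Px : ℕ → R := fun a => ∏ i ∈ Finset.univ.filter (fun i : Fin n => (i : ℕ) < a), X i
    let Py : ℕ → ℕ → R := fun a b =>
      ∏ i ∈ Finset.univ.filter (fun i : Fin n => a ≤ (i : ℕ) ∧ (i : ℕ) < a + b), X i
    let H : ℕ → ℕ → ℕ → ℕ := fun a b k =>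
      Module.finrank K (R ⧸ (Ideal.span {Px a, Py a b} ⊔ m ^ (k + 1)))
    ∀ k, H p q k ≤ H p' q' k :=
  stmt_19_general K n p q p' q' hpq' hp hq
end
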